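/- In the independent exponential family model with uniform priors, if for all pairs (k,k') the sets A_{kk'} ∪ B_{kk'} ⊆ {1,...,J_max} for some finite J_max, then the conditional class probability π_k(x) (which a priori depends on all coordinates x_1, x_2, ...) depends only on x_1,...,x_{J_max}; equivalently π_k = π_k^{(J)} for all J ≥ J_max. -/

import Mathlib

open Finset Real

/-!
Beyond index `Jmax` all classes share the same summands, so the exponent of every `h l x` splits
as a class-dependent finite sum over `j < Jmax` plus one common tail. The factor `exp (tail)` is
the same for every class and cancels from `h k x / ∑ l, h l x`, leaving a quantity that only
sees `x 0, …, x (Jmax - 1)`.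
-/

theorem tsum_eq_sum_range_add_tsum_of_eq_on_tail {G : Type*} [AddCommGroup G]
    [TopologicalSpace G] [IsTopologicalAddGroup G] [T2Space G] {f g : ℕ → G} {J : ℕ}
    (hf : Summable f)
    (hfg : ∀ j, J ≤ j → f j = g j) :
    ∑' j, f j = ∑ j ∈ range J, f j + ∑' i, g (i + J) := by
  rw [← hf.sum_add_tsum_nat_add J]
  exact congrArg _ (tsum_congr fun i => hfg _ (Nat.le_add_left _ _))

theorem div_sum_mul_right {ι R : Type*} [DivisionSemiring R] (s : Finset ι) (a : ι → R) {c : R}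
    (hc : c ≠ 0) (k : ι) :
    a k * c / ∑ l ∈ s, a l * c = a k / ∑ l ∈ s, a l := by
  rw [← Finset.sum_mul, mul_div_mul_right _ _ hc]

theorem exp_family_truncated_posterior_general (K : ℕ)
    (η : Fin K → ℕ → ℝ) (U W : Fin K → ℕ → ℝ → ℝ)
    (h : Fin K → (ℕ → ℝ) → ℝ)
    (hsum : ∀ (k : Fin K) (x : ℕ → ℝ), Summable (fun j : ℕ => η k j * U k j (x j) + W k j (x j)))
    (hdef : ∀ (k : Fin K) (x : ℕ → ℝ), h k x = Real.exp (∑' j : ℕ, (η k j * U k j (x j) + W k j (x j))))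
    (Jmax : ℕ)
    (htail : ∀ (k k' : Fin K) (j : ℕ), Jmax ≤ j →
      (∀ t : ℝ, η k j * U k j t = η k' j * U k' j t) ∧
        (∀ t : ℝ, W k j t = W k' j t)) :
    ∀ (k : Fin K) (x y : ℕ → ℝ), (∀ j < Jmax, x j = y j) →
      h k x / (∑ l, h l x) = h k y / (∑ l, h l y) := by
  intro k x y hxy
  set term : Fin K → (ℕ → ℝ) → ℕ → ℝ := fun l z j =>
    η l j * U l j (z j) + W l j (z j)
  have hfactor : ∀ l z, h l z =
      exp (∑ j ∈ range Jmax, term l z j) * exp (∑' i, term k z (i + Jmax)) := fun l z => by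
    have htail_eq : ∀ j, Jmax ≤ j → term l z j = term k z j := fun j hj => by
      simp only [term, (htail l k j hj).1, (htail l k j hj).2]
    rw [hdef, ← exp_add, tsum_eq_sum_range_add_tsum_of_eq_on_tail (hsum l z) htail_eq]
  have hhead : ∀ l, ∑ j ∈ range Jmax, term l x j = ∑ j ∈ range Jmax, term l y j :=
    fun l => sum_congr rfl fun j hj => by simp only [term, hxy j (mem_range.mp hj)]
  simp only [hfactor, hhead]
  let head : Fin K → ℝ := fun l => exp (∑ j ∈ range Jmax, term l y j)
  rw [div_sum_mul_right univ head (exp_ne_zero _), div_sum_mul_right univ head (exp_ne_zero _)]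

/-- In the independent exponential family model with uniform priors, if for every
pair `(k,k')` the index sets where the density factors differ are contained in
`{0,...,Jmax-1}`, then the conditional class probability
`π_k(x) = h_k(x)/∑_ℓ h_ℓ(x)` depends only on the first `Jmax` coordinates. -/
theorem exp_family_truncated_posterior (K : ℕ) (hK : 0 < K)
    (η : Fin K → ℕ → ℝ) (U W : Fin K → ℕ → ℝ → ℝ)
    (h : Fin K → (ℕ → ℝ) → ℝ)
    (hsum : ∀ (k : Fin K) (x : ℕ → ℝ), Summable (fun j : ℕ => η k j * U k j (x j) + W k j (x j)))
    (hdef : ∀ (k : Fin K) (x : ℕ → ℝ), h k x = Real.exp (∑' j : ℕ, (η k j * U k j (x j) + W k j (x j))))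
    (Jmax : ℕ)
    (htail : ∀ (k k' : Fin K) (j : ℕ), Jmax ≤ j →
      (∀ t : ℝ, η k j * U k j t = η k' j * U k' j t) ∧
        (∀ t : ℝ, W k j t = W k' j t)) :
    ∀ (k : Fin K) (x y : ℕ → ℝ), (∀ j < Jmax, x j = y j) →
      h k x / (∑ l, h l x) = h k y / (∑ l, h l y) :=
  exp_family_truncated_posterior_general K η U W h hsum hdef Jmax htail
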